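/- arXiv:2507.06322 — 3 statements merged into one kernel-verified Lean document; each statement's English description precedes it below -/
import Mathlib

section
/- Let G be a k-uniform hypergraph with n vertices and m edges. Then the Estrada index satisfies EE(G) ≥ √(n² + 2k(k−1)m), and equality holds if and only if G has no edges (G is the edgeless hypergraph on n vertices). -/
open scoped BigOperators

set_option linter.unusedSectionVars false

section Hyper

variable {V : Type*} [Fintype V] [DecidableEq V]

/-- The adjacency matrix of a hypergraph given by its edge set `E`:
the `(i,j)` entry, for `i ≠ j`, is the number of edges containing both `i` and `j`,
and the diagonal entries are `0`. -/
def adjMatrix (E : Finset (Finset V)) : Matrix V V ℝ :=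
  fun i j => if i = j then 0 else ((E.filter fun e => i ∈ e ∧ j ∈ e).card : ℝ)

theorem adjMatrix_isHermitian (E : Finset (Finset V)) :
    (adjMatrix E).IsHermitian := by
  unfold Matrix.IsHermitian
  ext i j
  simp only [Matrix.conjTranspose_apply, adjMatrix, star_trivial]
  rcases eq_or_ne i j with h | h
  · simp [h]
  · have hfilter : E.filter (fun e => j ∈ e ∧ i ∈ e) = E.filter (fun e => i ∈ e ∧ j ∈ e) :=
      Finset.filter_congr fun e _ => and_comm
    rw [if_neg (Ne.symm h), if_neg h, hfilter]

/-- The Estrada index of a hypergraph: `EE(G) = ∑ᵢ exp (λᵢ)`, the sum over the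
eigenvalues (with multiplicity) of the adjacency matrix; equivalently `tr (exp A(G))`. -/
noncomputable def estradaIndex (E : Finset (Finset V)) : ℝ :=
  ∑ i, Real.exp ((adjMatrix_isHermitian E).eigenvalues i)

/-- The energy of a hypergraph: `∑ᵢ |λᵢ|` over the adjacency eigenvalues. -/
noncomputable def energy (E : Finset (Finset V)) : ℝ :=
  ∑ i, |(adjMatrix_isHermitian E).eigenvalues i|

/-- The degree of a vertex: the number of edges containing it. -/
def degree (E : Finset (Finset V)) (v : V) : ℕ := (E.filter fun e => v ∈ e).card

end Hyper


lemma conj_pow_eq {N : Type*} [Fintype N] [DecidableEq N]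
    (A U D : Matrix N N ℝ) (hUU : U * star U = 1) (hsU : star U * U = 1)
    (hD : A = U * D * star U) (t : ℕ) : A ^ t = U * D ^ t * star U := by
  induction t with
  | zero => simpa using hUU.symm
  | succ s ih =>
    rw [pow_succ, ih, hD]
    calc U * D ^ s * star U * (U * D * star U)
        = U * D ^ s * (star U * U) * D * star U := by noncomm_ring
      _ = U * D ^ (s+1) * star U := by rw [hsU, mul_one, pow_succ]; noncomm_ring

lemma trace_pow_eq {N : Type*} [Fintype N] [DecidableEq N]
    {A : Matrix N N ℝ} (hA : A.IsHermitian) (t : ℕ) :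
    (A ^ t).trace = ∑ i, hA.eigenvalues i ^ t := by
  have hUU : (hA.eigenvectorUnitary : Matrix N N ℝ) * star (hA.eigenvectorUnitary : Matrix N N ℝ) = 1 :=
    (Matrix.mem_unitaryGroup_iff).mp hA.eigenvectorUnitary.2
  have hsU : star (hA.eigenvectorUnitary : Matrix N N ℝ) * (hA.eigenvectorUnitary : Matrix N N ℝ) = 1 :=
    (Matrix.mem_unitaryGroup_iff').mp hA.eigenvectorUnitary.2
  have hD : A = (hA.eigenvectorUnitary : Matrix N N ℝ) * Matrix.diagonal hA.eigenvalues
      * star (hA.eigenvectorUnitary : Matrix N N ℝ) := by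
    simpa using hA.spectral_theorem
  rw [conj_pow_eq A _ _ hUU hsU hD t, Matrix.trace_mul_cycle, hsU,
    Matrix.one_mul, Matrix.diagonal_pow, Matrix.trace_diagonal]
  simp [Pi.pow_apply]

lemma matpow_nonneg {N : Type*} [Fintype N] [DecidableEq N]
    {A : Matrix N N ℝ} (h : ∀ i j, 0 ≤ A i j) (t : ℕ) : ∀ i j, 0 ≤ (A ^ t) i j := by
  induction t with
  | zero =>
    intro i j; rw [pow_zero, Matrix.one_apply]
    split <;> norm_num
  | succ s ih =>
    intro i j; rw [pow_succ, Matrix.mul_apply]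
    exact Finset.sum_nonneg fun l _ => mul_nonneg (ih i l) (h l j)

lemma trace_matpow_nonneg {N : Type*} [Fintype N] [DecidableEq N]
    {A : Matrix N N ℝ} (h : ∀ i j, 0 ≤ A i j) (t : ℕ) : 0 ≤ (A ^ t).trace :=
  Finset.sum_nonneg fun i _ => matpow_nonneg h t i i

lemma sum_exp_eq_tsum {N : Type*} [Fintype N] [DecidableEq N]
    (c : ℝ) {A : Matrix N N ℝ} (hA : A.IsHermitian) :
    ∑ i, Real.exp (c * hA.eigenvalues i) = ∑' t : ℕ, (c ^ t / ((t.factorial : ℕ) : ℝ)) * (A ^ t).trace := by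
  have h1 : ∀ i : N, Real.exp (c * hA.eigenvalues i)
      = ∑' t : ℕ, (c * hA.eigenvalues i) ^ t / ((t.factorial : ℕ) : ℝ) := by
    intro i
    rw [Real.exp_eq_exp_ℝ, NormedSpace.exp_eq_tsum_div]
  calc ∑ i, Real.exp (c * hA.eigenvalues i)
      = ∑ i, ∑' t : ℕ, (c * hA.eigenvalues i) ^ t / ((t.factorial : ℕ) : ℝ) := by simp_rw [h1]
    _ = ∑' t : ℕ, ∑ i, (c * hA.eigenvalues i) ^ t / ((t.factorial : ℕ) : ℝ) :=
        (Summable.tsum_finsetSum fun i _ => Real.summable_pow_div_factorial _).symm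
    _ = ∑' t : ℕ, (c ^ t / ((t.factorial : ℕ) : ℝ)) * (A ^ t).trace := by
        congr 1; funext t
        rw [trace_pow_eq hA t, Finset.mul_sum]
        apply Finset.sum_congr rfl
        intro i _
        rw [mul_pow]; ring

lemma summable_trace_series {N : Type*} [Fintype N] [DecidableEq N]
    (c : ℝ) {A : Matrix N N ℝ} (hA : A.IsHermitian) :
    Summable (fun t : ℕ => (c ^ t / ((t.factorial : ℕ) : ℝ)) * (A ^ t).trace) := by
  have h : Summable (fun t : ℕ => ∑ i, (c * hA.eigenvalues i) ^ t / ((t.factorial : ℕ) : ℝ)) :=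
    summable_sum fun i _ => Real.summable_pow_div_factorial _
  refine h.congr fun t => ?_
  rw [trace_pow_eq hA t, Finset.mul_sum]
  apply Finset.sum_congr rfl
  intro i _
  rw [mul_pow]; ring

section Count
variable {n k : ℕ}

lemma count_sum (k : ℕ) (E : Finset (Finset (Fin n))) (hunif : ∀ e ∈ E, e.card = k) :
    ∑ i : Fin n, ∑ j : Fin n,
      (if i = j then 0 else (E.filter fun e => i ∈ e ∧ j ∈ e).card) = k * (k-1) * E.card := by
  have h1 : ∀ i j : Fin n, (if i = j then (0:ℕ) else (E.filter fun e => i ∈ e ∧ j ∈ e).card)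
      = ∑ e ∈ E, if i ≠ j ∧ i ∈ e ∧ j ∈ e then 1 else 0 := by
    intro i j
    by_cases h : i = j
    · simp [h]
    · rw [if_neg h, Finset.card_filter]
      exact Finset.sum_congr rfl fun e _ => by simp [h]
  simp_rw [h1]
  have hs1 : ∀ i : Fin n, (∑ j : Fin n, ∑ e ∈ E, (if i ≠ j ∧ i ∈ e ∧ j ∈ e then (1:ℕ) else 0))
      = ∑ e ∈ E, ∑ j : Fin n, (if i ≠ j ∧ i ∈ e ∧ j ∈ e then (1:ℕ) else 0) :=
    fun i => Finset.sum_comm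
  simp_rw [hs1]
  rw [Finset.sum_comm]
  have hedge : ∀ e ∈ E, ∑ i : Fin n, ∑ j : Fin n,
      (if i ≠ j ∧ i ∈ e ∧ j ∈ e then (1:ℕ) else 0) = k * (k-1) := by
    intro e he
    have hcard := hunif e he
    have hinner : ∀ i : Fin n, ∑ j : Fin n, (if i ≠ j ∧ i ∈ e ∧ j ∈ e then (1:ℕ) else 0)
        = if i ∈ e then k - 1 else 0 := by
      intro i
      by_cases hi : i ∈ e
      · rw [if_pos hi]
        have : ∀ j : Fin n, (if i ≠ j ∧ i ∈ e ∧ j ∈ e then (1:ℕ) else 0)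
            = if j ∈ e.erase i then 1 else 0 := by
          intro j
          by_cases hj : j ∈ e <;> by_cases hij : i = j <;>
            simp [Finset.mem_erase, hi, hj, hij, Ne.symm, eq_comm]
        simp_rw [this]
        rw [Finset.sum_ite_mem, Finset.univ_inter, Finset.sum_const, smul_eq_mul, mul_one,
          Finset.card_erase_of_mem hi, hcard]
      · rw [if_neg hi]
        exact Finset.sum_eq_zero fun j _ => by simp [hi]
    simp_rw [hinner]
    rw [Finset.sum_ite_mem, Finset.univ_inter, Finset.sum_const, smul_eq_mul, hcard]
  rw [Finset.sum_congr rfl hedge, Finset.sum_const, smul_eq_mul, mul_comm]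

lemma adj_entry_nonneg (E : Finset (Finset (Fin n))) : ∀ i j, 0 ≤ adjMatrix E i j := by
  intro i j
  unfold adjMatrix
  split <;> positivity

lemma adj_symm (E : Finset (Finset (Fin n))) (i j : Fin n) :
    adjMatrix E j i = adjMatrix E i j := by
  have h := congrFun (congrFun (adjMatrix_isHermitian E) i) j
  simpa [Matrix.conjTranspose_apply] using h

lemma adj_trace_zero (E : Finset (Finset (Fin n))) : (adjMatrix E).trace = 0 :=
  Finset.sum_eq_zero fun i _ => by simp [Matrix.diag, adjMatrix]

lemma adj_trace_sq (E : Finset (Finset (Fin n))) :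
    ((adjMatrix E) ^ 2).trace = ∑ i : Fin n, ∑ j : Fin n, (adjMatrix E i j) ^ 2 := by
  rw [pow_two, Matrix.trace]
  apply Finset.sum_congr rfl
  intro i _
  rw [Matrix.diag, Matrix.mul_apply]
  exact Finset.sum_congr rfl fun j _ => by rw [adj_symm, sq]

lemma adj_trace_sq_ge (hk : 1 ≤ k) (E : Finset (Finset (Fin n)))
    (hunif : ∀ e ∈ E, e.card = k) :
    ((k:ℝ) * ((k:ℝ)-1) * (E.card : ℝ)) ≤ ((adjMatrix E) ^ 2).trace := by
  have hcast : ∀ c : ℕ, (c:ℝ) ≤ (c:ℝ)^2 := by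
    intro c
    rcases Nat.eq_zero_or_pos c with h | h
    · simp [h]
    · have h1 : (1:ℝ) ≤ (c:ℝ) := by exact_mod_cast h
      nlinarith
  have hle : ∀ i j : Fin n, adjMatrix E i j ≤ (adjMatrix E i j)^2 := by
    intro i j
    unfold adjMatrix
    split
    · norm_num
    · exact hcast _
  have h2 : ((∑ i : Fin n, ∑ j : Fin n,
      (if i = j then 0 else (E.filter fun e => i ∈ e ∧ j ∈ e).card) : ℕ) : ℝ)
      = ∑ i : Fin n, ∑ j : Fin n, adjMatrix E i j := by
    push_cast
    apply Finset.sum_congr rfl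
    intro i _
    apply Finset.sum_congr rfl
    intro j _
    unfold adjMatrix
    split <;> simp
  calc (k:ℝ) * ((k:ℝ)-1) * (E.card : ℝ)
      = ((k * (k-1) * E.card : ℕ) : ℝ) := by
        push_cast [Nat.cast_sub hk]; ring
    _ = ∑ i : Fin n, ∑ j : Fin n, adjMatrix E i j := by
        rw [count_sum k E hunif] at h2; exact h2
    _ ≤ ∑ i : Fin n, ∑ j : Fin n, (adjMatrix E i j)^2 :=
        Finset.sum_le_sum fun i _ => Finset.sum_le_sum fun j _ => hle i j
    _ = ((adjMatrix E) ^ 2).trace := (adj_trace_sq E).symm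

lemma adj_trace_four_ge_one (hk : 2 ≤ k) (E : Finset (Finset (Fin n)))
    (hne : E ≠ ∅) (hunif : ∀ e ∈ E, e.card = k) :
    1 ≤ ((adjMatrix E) ^ 4).trace := by
  obtain ⟨e, he⟩ := Finset.nonempty_iff_ne_empty.mpr hne
  have hcard : 1 < e.card := by rw [hunif e he]; omega
  obtain ⟨i, hi, j, hj, hij⟩ := Finset.one_lt_card.mp hcard
  set A := adjMatrix E with hAdef
  have hnn := adj_entry_nonneg E
  have hAij : 1 ≤ A i j := by
    have : e ∈ E.filter fun f => i ∈ f ∧ j ∈ f := Finset.mem_filter.mpr ⟨he, hi, hj⟩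
    have hpos : 1 ≤ (E.filter fun f => i ∈ f ∧ j ∈ f).card :=
      Finset.card_pos.mpr ⟨e, this⟩
    rw [hAdef]
    unfold adjMatrix
    rw [if_neg hij]
    exact_mod_cast hpos
  have hA2 : 1 ≤ (A ^ 2) i i := by
    rw [pow_two, Matrix.mul_apply]
    calc (1:ℝ) = 1 * 1 := by ring
      _ ≤ A i j * A j i := by
        have hji : 1 ≤ A j i := by rw [hAdef, adj_symm E i j]; exact hAij
        exact mul_le_mul hAij hji (by norm_num) (le_trans (by norm_num) hAij)
      _ ≤ ∑ l, A i l * A l i :=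
        Finset.single_le_sum (fun l _ => mul_nonneg (hnn i l) (hnn l i)) (Finset.mem_univ j)
  have hA4 : 1 ≤ (A ^ 4) i i := by
    have h44 : A ^ 4 = A ^ 2 * A ^ 2 := by rw [← pow_add]
    rw [h44, Matrix.mul_apply]
    have h2nn := matpow_nonneg hnn 2
    calc (1:ℝ) = 1 * 1 := by ring
      _ ≤ (A ^ 2) i i * (A ^ 2) i i :=
        mul_le_mul hA2 hA2 (by norm_num) (le_trans (by norm_num) hA2)
      _ ≤ ∑ q, (A ^ 2) i q * (A ^ 2) q i :=
        Finset.single_le_sum (fun q _ => mul_nonneg (h2nn i q) (h2nn q i)) (Finset.mem_univ i)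
  calc (1:ℝ) ≤ (A ^ 4) i i := hA4
    _ ≤ (A ^ 4).trace :=
      Finset.single_le_sum (fun p _ => matpow_nonneg hnn 4 p p) (Finset.mem_univ i)

end Count

lemma diag_bound {n : ℕ} (E : Finset (Finset (Fin n))) :
    (n:ℝ) + 2 * ((adjMatrix E) ^ 2).trace + (2/3) * ((adjMatrix E) ^ 4).trace
      ≤ ∑ i, Real.exp (2 * (adjMatrix_isHermitian E).eigenvalues i) := by
  have hA := adjMatrix_isHermitian E
  rw [sum_exp_eq_tsum 2 (adjMatrix_isHermitian E)]
  have hnn := adj_entry_nonneg E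
  have hterm : ∀ t : ℕ, 0 ≤ (2:ℝ)^t / ((t.factorial : ℕ) : ℝ) * ((adjMatrix E) ^ t).trace :=
    fun t => mul_nonneg (by positivity) (trace_matpow_nonneg hnn t)
  have hsum := Summable.sum_le_tsum ({0,1,2,4} : Finset ℕ) (fun t _ => hterm t)
    (summable_trace_series 2 (adjMatrix_isHermitian E))
  refine le_trans ?_ hsum
  rw [show ({0,1,2,4} : Finset ℕ) = insert 0 (insert 1 (insert 2 ({4} : Finset ℕ))) from rfl,
    Finset.sum_insert (by decide), Finset.sum_insert (by decide),
    Finset.sum_insert (by decide), Finset.sum_singleton]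
  have h0 : ((adjMatrix E) ^ 0).trace = (n:ℝ) := by
    rw [pow_zero, Matrix.trace_one]; simp
  have h1t : ((adjMatrix E) ^ 1).trace = 0 := by rw [pow_one]; exact adj_trace_zero E
  rw [h0, h1t]
  norm_num [Nat.factorial]
  linarith

/-- For a `k`-uniform hypergraph `G` with `n` vertices and `m` edges,
`EE(G) ≥ √(n² + 2k(k-1)m)`, with equality iff `G` is edgeless. -/
theorem stmt_5 (n k : ℕ) (hk : 2 ≤ k)
    (E : Finset (Finset (Fin n))) (hunif : ∀ e ∈ E, e.card = k) :
    Real.sqrt ((n : ℝ) ^ 2 + 2 * (k : ℝ) * ((k : ℝ) - 1) * (E.card : ℝ)) ≤ estradaIndex E ∧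
      (estradaIndex E =
          Real.sqrt ((n : ℝ) ^ 2 + 2 * (k : ℝ) * ((k : ℝ) - 1) * (E.card : ℝ)) ↔ E = ∅) := by
  rcases Nat.eq_zero_or_pos n with hn0 | hn
  · subst hn0
    have hE : E = ∅ := Finset.eq_empty_of_forall_notMem fun e he => by
      have h1 := hunif e he
      have h2 : e = ∅ := Finset.eq_empty_of_isEmpty e
      rw [h2] at h1; simp at h1; omega
    subst hE
    have hee : estradaIndex (∅ : Finset (Finset (Fin 0))) = 0 := by
      unfold estradaIndex; simp
    constructor
    · rw [hee]; simp
    · constructor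
      · intro _; rfl
      · intro _; rw [hee]; simp
  · -- main case, n ≥ 1
    have hEE : estradaIndex E = ∑ i, Real.exp ((adjMatrix_isHermitian E).eigenvalues i) := rfl
    set μ := (adjMatrix_isHermitian E).eigenvalues with hμdef
    have hnn := adj_entry_nonneg E
    have hS0 : ∑ i, μ i = 0 := by
      have h := trace_pow_eq (adjMatrix_isHermitian E) 1
      rw [pow_one, adj_trace_zero] at h
      simpa using h.symm
    -- EE² split
    have hsq : (estradaIndex E)^2
        = ∑ i, Real.exp (2 * μ i)
          + ∑ i, ∑ j ∈ Finset.univ.erase i, Real.exp (μ i + μ j) := by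
      calc (estradaIndex E)^2 = ∑ i, ∑ j, Real.exp (μ i + μ j) := by
            rw [hEE, sq, Fintype.sum_mul_sum]
            simp_rw [← Real.exp_add]
        _ = ∑ i, (Real.exp (2 * μ i) + ∑ j ∈ Finset.univ.erase i, Real.exp (μ i + μ j)) := by
            apply Finset.sum_congr rfl
            intro i _
            rw [← Finset.add_sum_erase _ _ (Finset.mem_univ i), two_mul]
        _ = _ := Finset.sum_add_distrib
    -- off-diagonal bound
    have hlow : ∀ i : Fin n, ((n:ℝ)-1) + ((n:ℝ)-2) * μ i
        ≤ ∑ j ∈ Finset.univ.erase i, Real.exp (μ i + μ j) := by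
      intro i
      have h1 : ∑ j ∈ Finset.univ.erase i, (1 + (μ i + μ j))
          ≤ ∑ j ∈ Finset.univ.erase i, Real.exp (μ i + μ j) :=
        Finset.sum_le_sum fun j _ => by
          have := Real.add_one_le_exp (μ i + μ j); linarith
      have hcaria : ((Finset.univ.erase i).card : ℝ) = (n:ℝ) - 1 := by
        rw [Finset.card_erase_of_mem (Finset.mem_univ i), Finset.card_univ, Fintype.card_fin,
          Nat.cast_sub hn]
        simp
      have hsum_erase : ∑ j ∈ Finset.univ.erase i, μ j = 0 - μ i := by
        rw [Finset.sum_erase_eq_sub (Finset.mem_univ i), hS0]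
      have hexp : ∑ j ∈ Finset.univ.erase i, (1 + (μ i + μ j))
          = ((n:ℝ) - 1) * (1 + μ i) + (0 - μ i) := by
        have : ∀ j, (1 + (μ i + μ j)) = (1 + μ i) + μ j := fun j => by ring
        simp_rw [this]
        rw [Finset.sum_add_distrib, Finset.sum_const, hsum_erase, nsmul_eq_mul, hcaria]
      have hring : ((n:ℝ) - 1) * (1 + μ i) + (0 - μ i) = ((n:ℝ)-1) + ((n:ℝ)-2) * μ i := by ring
      linarith
    have hoff : (n:ℝ)^2 - n ≤ ∑ i, ∑ j ∈ Finset.univ.erase i, Real.exp (μ i + μ j) := by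
      have h2 : ∑ i : Fin n, (((n:ℝ)-1) + ((n:ℝ)-2) * μ i)
          = (n:ℝ) * ((n:ℝ)-1) + ((n:ℝ)-2) * (∑ i, μ i) := by
        rw [Finset.sum_add_distrib, Finset.sum_const, ← Finset.mul_sum, Finset.card_univ,
          Fintype.card_fin, nsmul_eq_mul]
      calc (n:ℝ)^2 - n = (n:ℝ) * ((n:ℝ)-1) + ((n:ℝ)-2) * (0:ℝ) := by ring
        _ = ∑ i : Fin n, (((n:ℝ)-1) + ((n:ℝ)-2) * μ i) := by rw [h2, hS0]
        _ ≤ _ := Finset.sum_le_sum fun i _ => hlow i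
    -- diagonal bound
    have hdiag := diag_bound E
    have hT2 := adj_trace_sq_ge (by omega : 1 ≤ k) E hunif
    have hT4nn := trace_matpow_nonneg hnn 4
    have hmain : (n:ℝ)^2 + 2 * ((k:ℝ) * ((k:ℝ)-1) * (E.card:ℝ))
        + (2/3) * ((adjMatrix E) ^ 4).trace ≤ (estradaIndex E)^2 := by
      rw [hsq]; push_cast at hdiag ⊢; linarith
    have hEEnn : (0:ℝ) ≤ estradaIndex E := by
      rw [hEE]; exact Finset.sum_nonneg fun i _ => (Real.exp_pos _).le
    have hpart1 : Real.sqrt ((n : ℝ) ^ 2 + 2 * (k : ℝ) * ((k : ℝ) - 1) * (E.card : ℝ))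
        ≤ estradaIndex E := by
      have h2 : (n : ℝ) ^ 2 + 2 * (k : ℝ) * ((k : ℝ) - 1) * (E.card : ℝ)
          ≤ (estradaIndex E)^2 := by linarith
      calc Real.sqrt ((n : ℝ) ^ 2 + 2 * (k : ℝ) * ((k : ℝ) - 1) * (E.card : ℝ))
          ≤ Real.sqrt ((estradaIndex E)^2) := Real.sqrt_le_sqrt h2
        _ = estradaIndex E := Real.sqrt_sq hEEnn
    refine ⟨hpart1, ?_, ?_⟩
    · intro heq
      by_contra hne
      have hT4 := adj_trace_four_ge_one hk E hne hunif
      have hstrict : (n : ℝ) ^ 2 + 2 * (k : ℝ) * ((k : ℝ) - 1) * (E.card : ℝ)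
          < (estradaIndex E)^2 := by linarith
      have hEEpos : (0:ℝ) < estradaIndex E := by
        rw [hEE]
        exact Finset.sum_pos (fun i _ => Real.exp_pos _) ⟨⟨0, hn⟩, Finset.mem_univ _⟩
      have hlt := (Real.sqrt_lt' hEEpos).mpr hstrict
      rw [← heq] at hlt
      exact lt_irrefl _ hlt
    · intro hE
      subst hE
      have hA0 : adjMatrix (∅ : Finset (Finset (Fin n))) = 0 := by
        ext i j; unfold adjMatrix; split <;> simp
      have hsum0 : ∑ i, μ i ^ 2 = 0 := by
        have h := trace_pow_eq (adjMatrix_isHermitian (∅ : Finset (Finset (Fin n)))) 2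
        have h0t : ((adjMatrix (∅ : Finset (Finset (Fin n)))) ^ 2).trace = 0 := by
          rw [hA0, zero_pow (by norm_num), Matrix.trace_zero]
        exact h.symm.trans h0t
      have hzero : ∀ i, μ i = 0 := by
        intro i
        have h := (Finset.sum_eq_zero_iff_of_nonneg
          (fun j _ => sq_nonneg (μ j))).mp hsum0 i (Finset.mem_univ i)
        exact pow_eq_zero_iff (by norm_num) |>.mp h
      have hEEn : estradaIndex (∅ : Finset (Finset (Fin n))) = (n:ℝ) := by
        rw [hEE]
        simp_rw [hzero]
        simp
      rw [hEEn]
      simp only [Finset.card_empty, Nat.cast_zero, mul_zero, add_zero]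
      rw [Real.sqrt_sq (by positivity)]
end

section
/- Let G be a k-uniform hypergraph with n vertices and m edges. Then the Estrada index satisfies EE(G) ≤ n − 1 + e^{√((k−1)m(m(k−2)+2))}, and equality holds if and only if G has no edges (G is the edgeless hypergraph on n vertices). -/
open scoped BigOperators

set_option linter.unusedSectionVars false

/-! The adjacency eigenvalues satisfy `∑ λᵢ = tr A = 0` and
`∑ λᵢ² = tr A² = ∑_{e,f ∈ E} |e ∩ f| (|e ∩ f| - 1) ≤ (k-1) m (m (k-2) + 2)`, because distinct
edges share at most `k - 1` vertices. With `t = √(∑ λᵢ²)` every `|λᵢ| ≤ t`, and comparing power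
series termwise gives `eˣ - 1 - x ≤ (x/t)² (eᵗ - 1 - t)` for `|x| ≤ t`. Summing over the
eigenvalues, `EE ≤ n - 1 + eᵗ - t`, which is strictly below the bound unless `t = 0`; as moreover
`EE ≥ n` by `eˣ ≥ 1 + x`, equality forces the bound to be `n`, i.e. `m = 0`. -/

open Finset

theorem Matrix.IsHermitian.trace_mul_self_eq_sum_sq_eigenvalues {𝕜 ι : Type*} [RCLike 𝕜]
    [Fintype ι] [DecidableEq ι] {A : Matrix ι ι 𝕜} (hA : A.IsHermitian) :
    (A * A).trace = ∑ i, (hA.eigenvalues i : 𝕜) ^ 2 := by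
  conv_lhs => rw [hA.spectral_theorem, ← map_mul, Unitary.conjStarAlgAut_apply,
    Matrix.trace_mul_cycle, Unitary.coe_star_mul_self, Matrix.one_mul,
    Matrix.diagonal_mul_diagonal, Matrix.trace_diagonal]
  simp [sq]

theorem Real.hasSum_exp_sub_one_sub (x : ℝ) :
    HasSum (fun n : ℕ => x ^ (n + 2) / (n + 2).factorial) (Real.exp x - 1 - x) := by
  have h := NormedSpace.expSeries_div_hasSum_exp x
  rw [← Real.exp_eq_exp_ℝ, ← hasSum_nat_add_iff' 2] at h
  simpa [Finset.sum_range_succ, sub_sub] using h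

theorem Real.sq_mul_exp_sub_one_sub_le {x t : ℝ} (hxt : |x| ≤ t) :
    t ^ 2 * (Real.exp x - 1 - x) ≤ x ^ 2 * (Real.exp t - 1 - t) := by
  refine hasSum_le (fun n => ?_) ((Real.hasSum_exp_sub_one_sub x).mul_left _)
    ((Real.hasSum_exp_sub_one_sub t).mul_left _)
  rw [mul_div_assoc', mul_div_assoc']
  refine div_le_div_of_nonneg_right ?_ (by positivity)
  calc t ^ 2 * x ^ (n + 2) ≤ t ^ 2 * |x| ^ (n + 2) :=
        mul_le_mul_of_nonneg_left ((le_abs_self _).trans (abs_pow x _).le) (sq_nonneg t)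
    _ = x ^ 2 * |x| ^ n * t ^ 2 := by rw [pow_add, sq_abs]; ring
    _ ≤ x ^ 2 * t ^ n * t ^ 2 := by gcongr
    _ = x ^ 2 * t ^ (n + 2) := by ring

section SumExp

variable {ι : Type*} [Fintype ι]

theorem card_le_sum_exp_of_sum_eq_zero (x : ι → ℝ) (hx : ∑ i, x i = 0) :
    (Fintype.card ι : ℝ) ≤ ∑ i, Real.exp (x i) := by
  calc (Fintype.card ι : ℝ) = ∑ i, (x i + 1) := by simp [sum_add_distrib, hx]
    _ ≤ ∑ i, Real.exp (x i) := sum_le_sum fun i _ => Real.add_one_le_exp (x i)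

theorem sum_exp_le_of_sum_eq_zero (x : ι → ℝ) (hx : ∑ i, x i = 0) :
    ∑ i, Real.exp (x i) ≤ Fintype.card ι - 1 + Real.exp √(∑ i, x i ^ 2) - √(∑ i, x i ^ 2) := by
  set t := √(∑ i, x i ^ 2)
  have habs : ∀ i, |x i| ≤ t := fun i =>
    Real.abs_le_sqrt (single_le_sum (fun j _ => sq_nonneg (x j)) (mem_univ i))
  rcases (Real.sqrt_nonneg _ : 0 ≤ t).eq_or_lt with ht | ht
  · have hzero : ∀ i, x i = 0 := fun i => abs_nonpos_iff.1 (ht ▸ habs i)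
    have ht0 : t = 0 := ht.symm
    simp [hzero, ht0]
  · have ht2 : t ^ 2 = ∑ i, x i ^ 2 := Real.sq_sqrt (sum_nonneg fun i _ => sq_nonneg _)
    have hsum : t ^ 2 * (∑ i, Real.exp (x i) - Fintype.card ι) ≤
        t ^ 2 * (Real.exp t - 1 - t) := by
      calc t ^ 2 * (∑ i, Real.exp (x i) - Fintype.card ι)
          = ∑ i, t ^ 2 * (Real.exp (x i) - 1 - x i) := by
            simp [← mul_sum, sum_sub_distrib, hx]
        _ ≤ ∑ i, x i ^ 2 * (Real.exp t - 1 - t) :=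
            sum_le_sum fun i _ => Real.sq_mul_exp_sub_one_sub_le (habs i)
        _ = t ^ 2 * (Real.exp t - 1 - t) := by rw [← sum_mul, ht2]
    linarith [le_of_mul_le_mul_left hsum (by positivity)]

end SumExp

theorem Finset.card_inter_lt_of_ne {α : Type*} [DecidableEq α] {e f : Finset α}
    (hcard : #f ≤ #e) (hne : e ≠ f) : #(e ∩ f) < #e :=
  card_lt_card <| inter_subset_left.ssubset_of_ne fun h =>
    hne (eq_of_subset_of_card_le (inter_eq_left.1 h) hcard)

section Hypergraph

variable {V : Type*} [Fintype V] [DecidableEq V] (E : Finset (Finset V))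

theorem sum_eigenvalues_adjMatrix : ∑ i, (adjMatrix_isHermitian E).eigenvalues i = 0 := by
  simpa [Matrix.trace, adjMatrix] using (adjMatrix_isHermitian E).trace_eq_sum_eigenvalues.symm

theorem sum_sq_eigenvalues_adjMatrix :
    ∑ i, (adjMatrix_isHermitian E).eigenvalues i ^ 2 = ∑ i, ∑ j, adjMatrix E i j ^ 2 := by
  have h := (adjMatrix_isHermitian E).trace_mul_self_eq_sum_sq_eigenvalues
  simp only [RCLike.ofReal_real_eq_id, id] at h
  rw [← h, Matrix.trace]
  refine sum_congr rfl fun i _ => ?_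
  simp only [Matrix.diag_apply, Matrix.mul_apply, sq]
  refine sum_congr rfl fun j _ => ?_
  have hsymm : adjMatrix E j i = adjMatrix E i j := by
    simpa using (adjMatrix_isHermitian E).apply i j
  rw [hsymm]

theorem adjMatrix_apply_eq_sum (i j : V) :
    adjMatrix E i j = ∑ e ∈ E, if (i, j) ∈ e.offDiag then 1 else 0 := by
  by_cases hij : i = j
  · simp [adjMatrix, hij]
  · simp only [adjMatrix, natCast_card_filter, mem_offDiag, hij, ne_eq,
      not_false_eq_true, and_true, if_false]

theorem sum_sq_adjMatrix :
    ∑ i, ∑ j, adjMatrix E i j ^ 2 = ∑ e ∈ E, ∑ f ∈ E, (#(e ∩ f).offDiag : ℝ) := by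
  simp only [adjMatrix_apply_eq_sum, sq, sum_mul_sum, ite_zero_mul_ite_zero, mul_one,
    ← mem_inter, ← offDiag_inter]
  rw [← Fintype.sum_prod_type', sum_comm]
  refine sum_congr rfl fun e _ => ?_
  rw [sum_comm]
  refine sum_congr rfl fun f _ => ?_
  rw [sum_boole, filter_mem_eq_inter, univ_inter]

theorem sum_card_offDiag_inter_le {k : ℕ} (hk : 2 ≤ k) (hunif : ∀ e ∈ E, #e = k) :
    ∑ e ∈ E, ∑ f ∈ E, (#(e ∩ f).offDiag : ℝ) ≤
      ((k : ℝ) - 1) * #E * (#E * ((k : ℝ) - 2) + 2) := by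
  have hk' : (2 : ℝ) ≤ k := by exact_mod_cast hk
  have hpair : ∀ e ∈ E, ∀ f ∈ E.erase e, (#(e ∩ f).offDiag : ℝ) ≤ (k - 1) * (k - 2) := by
    intro e he f hf
    obtain ⟨hfe, hf⟩ := mem_erase.1 hf
    have hlt : #(e ∩ f) < k :=
      hunif e he ▸ card_inter_lt_of_ne (by rw [hunif e he, hunif f hf]) (Ne.symm hfe)
    have hlt' : (#(e ∩ f) : ℝ) + 1 ≤ k := by exact_mod_cast hlt
    rw [offDiag_card, Nat.cast_sub (Nat.le_mul_self _), Nat.cast_mul]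
    nlinarith
  have hrow : ∀ e ∈ E, ∑ f ∈ E, (#(e ∩ f).offDiag : ℝ) ≤ (k - 1) * (#E * (k - 2) + 2) := by
    intro e he
    rw [← add_sum_erase _ _ he, inter_self, offDiag_card, Nat.cast_sub (Nat.le_mul_self _),
      Nat.cast_mul, hunif e he]
    calc ((k : ℝ) * k - k) + ∑ f ∈ E.erase e, (#(e ∩ f).offDiag : ℝ)
        ≤ ((k : ℝ) * k - k) + #(E.erase e) • ((k - 1) * (k - 2)) :=
          add_le_add_right (sum_le_card_nsmul _ _ _ (hpair e he)) _
      _ = (k - 1) * (#E * (k - 2) + 2) := by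
          rw [nsmul_eq_mul, cast_card_erase_of_mem he]; ring
  calc ∑ e ∈ E, ∑ f ∈ E, (#(e ∩ f).offDiag : ℝ)
      ≤ #E • (((k : ℝ) - 1) * (#E * (k - 2) + 2)) := sum_le_card_nsmul _ _ _ hrow
    _ = (k - 1) * #E * (#E * (k - 2) + 2) := by rw [nsmul_eq_mul]; ring

end Hypergraph

/-- For a `k`-uniform hypergraph `G` with `n` vertices and `m` edges,
`EE(G) ≤ n - 1 + e^{√((k-1)m(m(k-2)+2))}`, with equality iff `G` is edgeless. -/
theorem stmt_6 (n k : ℕ) (hk : 2 ≤ k)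
    (E : Finset (Finset (Fin n))) (hunif : ∀ e ∈ E, e.card = k) :
    estradaIndex E ≤ (n : ℝ) - 1 +
        Real.exp (Real.sqrt (((k : ℝ) - 1) * (E.card : ℝ) * ((E.card : ℝ) * ((k : ℝ) - 2) + 2))) ∧
      (estradaIndex E = (n : ℝ) - 1 +
          Real.exp (Real.sqrt (((k : ℝ) - 1) * (E.card : ℝ) * ((E.card : ℝ) * ((k : ℝ) - 2) + 2)))
        ↔ E = ∅) := by
  set B : ℝ := ((k : ℝ) - 1) * (E.card : ℝ) * ((E.card : ℝ) * ((k : ℝ) - 2) + 2)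
  have hsum := sum_eigenvalues_adjMatrix E
  have hB : ∑ i, (adjMatrix_isHermitian E).eigenvalues i ^ 2 ≤ B := by
    rw [sum_sq_eigenvalues_adjMatrix, sum_sq_adjMatrix]
    exact sum_card_offDiag_inter_le E hk hunif
  set t := √(∑ i, (adjMatrix_isHermitian E).eigenvalues i ^ 2)
  have hupper : estradaIndex E ≤ n - 1 + Real.exp t - t := by
    simpa [estradaIndex] using sum_exp_le_of_sum_eq_zero _ hsum
  have hlower : (n : ℝ) ≤ estradaIndex E := by
    simpa [estradaIndex] using card_le_sum_exp_of_sum_eq_zero _ hsum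
  have ht : 0 ≤ t := Real.sqrt_nonneg _
  have hexp : Real.exp t ≤ Real.exp √B := Real.exp_le_exp.2 (Real.sqrt_le_sqrt hB)
  refine ⟨by linarith, fun heq => ?_, fun hE => ?_⟩
  · have ht0 : t = 0 := by linarith
    have hsqrtB : √B ≤ 0 := by
      rw [← Real.exp_le_one_iff]
      linarith [Real.exp_zero, ht0 ▸ hupper]
    by_contra hE
    have hm : (0 : ℝ) < E.card := by exact_mod_cast card_pos.2 (nonempty_iff_ne_empty.2 hE)
    have hk' : (2 : ℝ) ≤ k := by exact_mod_cast hk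
    have hBpos : 0 < B := mul_pos (mul_pos (by linarith) hm) (by nlinarith)
    exact (Real.sqrt_pos.2 hBpos).not_ge hsqrtB
  · have hB0 : B = 0 := by simp [B, hE]
    rw [hB0, Real.sqrt_zero, Real.exp_zero] at hexp ⊢
    linarith
end

section
/- Let G be a hypergraph on n vertices and let e' be a subset of the vertex set with |e'| ≥ 2 that is not an edge of G. Then EE(G) < EE(G + e'), where G + e' is the hypergraph obtained from G by adding the edge e'. -/
open scoped BigOperators

set_option linter.unusedSectionVars false

section AuxLemmas

variable {V : Type*} [Fintype V] [DecidableEq V]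

lemma my_conj_pow {U A : Matrix V V ℝ} (h1 : U * star U = 1) (h2 : star U * U = 1) (k : ℕ) :
    (star U * A * U) ^ k = star U * A ^ k * U := by
  induction k with
  | zero => simp [h2]
  | succ k ih =>
      rw [pow_succ, ih, pow_succ]
      calc star U * A ^ k * U * (star U * A * U)
          = star U * A ^ k * (U * star U) * (A * U) := by
            simp only [mul_assoc]
        _ = star U * (A ^ k * A) * U := by rw [h1]; simp only [mul_one, mul_assoc]

lemma my_trace_pow_eq (A : Matrix V V ℝ) (hA : A.IsHermitian) (k : ℕ) :
    (A ^ k).trace = ∑ i, (hA.eigenvalues i) ^ k := by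
  set U : Matrix V V ℝ := (hA.eigenvectorUnitary : Matrix V V ℝ) with hUdef
  have hU1 : U * star U = 1 := (Matrix.mem_unitaryGroup_iff).mp hA.eigenvectorUnitary.2
  have hU2 : star U * U = 1 := (Matrix.mem_unitaryGroup_iff').mp hA.eigenvectorUnitary.2
  have hdiag : star U * A * U = Matrix.diagonal (RCLike.ofReal ∘ hA.eigenvalues) := by
    have := hA.conjStarAlgAut_star_eigenvectorUnitary
    rw [Unitary.conjStarAlgAut_star_apply] at this
    exact this
  have key : star U * A ^ k * U = Matrix.diagonal (fun i => (hA.eigenvalues i) ^ k) := by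
    rw [← my_conj_pow hU1 hU2, hdiag, Matrix.diagonal_pow]
    congr 1
  have htr : (star U * A ^ k * U).trace = (A ^ k).trace := by
    rw [Matrix.trace_mul_comm, ← mul_assoc, hU1, one_mul]
  rw [← htr, key, Matrix.trace_diagonal]

lemma my_pow_entry_nonneg {A : Matrix V V ℝ} (h : ∀ i j, 0 ≤ A i j) (k : ℕ) :
    ∀ i j, 0 ≤ (A ^ k) i j := by
  induction k with
  | zero => intro i j; simp [Matrix.one_apply]; positivity
  | succ k ih =>
      intro i j
      rw [pow_succ, Matrix.mul_apply]
      exact Finset.sum_nonneg fun l _ => mul_nonneg (ih i l) (h l j)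

lemma my_pow_entry_mono {A B : Matrix V V ℝ} (hA : ∀ i j, 0 ≤ A i j)
    (hAB : ∀ i j, A i j ≤ B i j) (k : ℕ) : ∀ i j, (A ^ k) i j ≤ (B ^ k) i j := by
  induction k with
  | zero => intro i j; simp
  | succ k ih =>
      intro i j
      rw [pow_succ, pow_succ, Matrix.mul_apply, Matrix.mul_apply]
      refine Finset.sum_le_sum fun l _ => ?_
      exact mul_le_mul (ih i l) (hAB l j) (hA l j) (my_pow_entry_nonneg
        (fun a b => le_trans (hA a b) (hAB a b)) k i l)

lemma adj_nonneg (E : Finset (Finset V)) (i j : V) : 0 ≤ adjMatrix E i j := by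
  unfold adjMatrix
  split <;> positivity

lemma adj_mono (E : Finset (Finset V)) (e' : Finset V) (i j : V) :
    adjMatrix E i j ≤ adjMatrix (insert e' E) i j := by
  unfold adjMatrix
  split
  · exact le_rfl
  · exact_mod_cast Finset.card_le_card (Finset.monotone_filter_left _ (Finset.subset_insert _ _))

lemma adj_insert_entry (E : Finset (Finset V)) (e' : Finset V) (he' : e' ∉ E)
    {i j : V} (hij : i ≠ j) (hi : i ∈ e') (hj : j ∈ e') :
    adjMatrix (insert e' E) i j = adjMatrix E i j + 1 := by
  unfold adjMatrix
  rw [if_neg hij, if_neg hij, Finset.filter_insert, if_pos ⟨hi, hj⟩,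
    Finset.card_insert_of_notMem (fun h => he' (Finset.mem_filter.mp h).1)]
  push_cast
  ring

end AuxLemmas

lemma estrada_eq_tsum {V : Type*} [Fintype V] [DecidableEq V] (E : Finset (Finset V)) :
    estradaIndex E = ∑' k : ℕ, ((adjMatrix E) ^ k).trace / (k.factorial : ℝ) := by
  unfold estradaIndex
  have hexp : ∀ i, Real.exp ((adjMatrix_isHermitian E).eigenvalues i)
      = ∑' k : ℕ, ((adjMatrix_isHermitian E).eigenvalues i) ^ k / (k.factorial : ℝ) := by
    intro i
    rw [Real.exp_eq_exp_ℝ, NormedSpace.exp_eq_tsum_div]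
  simp_rw [hexp]
  rw [← Summable.tsum_finsetSum (fun i _ => Real.summable_pow_div_factorial _)]
  refine tsum_congr fun k => ?_
  rw [my_trace_pow_eq _ (adjMatrix_isHermitian E) k, Finset.sum_div]

/-- Adding a new edge `e'` (of cardinality at least `2`) to a hypergraph `G`
strictly increases the Estrada index: `EE(G) < EE(G + e')`. -/
theorem stmt_10 (n : ℕ) (E : Finset (Finset (Fin n)))
    (hE : ∀ e ∈ E, 2 ≤ e.card)
    (e' : Finset (Fin n)) (he'card : 2 ≤ e'.card) (he' : e' ∉ E) :
    estradaIndex E < estradaIndex (insert e' E) := by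
  classical
  set A := adjMatrix E with hAdef
  set B := adjMatrix (insert e' E) with hBdef
  have hA0 : ∀ i j, 0 ≤ A i j := adj_nonneg E
  have hB0 : ∀ i j, 0 ≤ B i j := adj_nonneg _
  have hAB : ∀ i j, A i j ≤ B i j := adj_mono E e'
  obtain ⟨a, b, ha, hb, hab⟩ := Finset.one_lt_card_iff.mp (by omega : 1 < e'.card)
  have hBa : B a b = A a b + 1 := adj_insert_entry E e' he' hab ha hb
  have hBb : B b a = A b a + 1 := adj_insert_entry E e' he' (Ne.symm hab) hb ha
  -- traces of powers
  have htr_le : ∀ k, (A ^ k).trace ≤ (B ^ k).trace := fun k =>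
    Finset.sum_le_sum fun i _ => my_pow_entry_mono hA0 hAB k i i
  have htr0 : ∀ k, 0 ≤ (A ^ k).trace := fun k =>
    Finset.sum_nonneg fun i _ => my_pow_entry_nonneg hA0 k i i
  have htr2 : (A ^ 2).trace < (B ^ 2).trace := by
    have h2 : ∀ (M : Matrix (Fin n) (Fin n) ℝ),
        (M ^ 2).trace = ∑ i, ∑ j, M i j * M j i := by
      intro M
      rw [sq]
      simp [Matrix.trace, Matrix.mul_apply, Matrix.diag]
    rw [h2, h2]
    refine Finset.sum_lt_sum (fun i _ => Finset.sum_le_sum fun j _ =>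
      mul_le_mul (hAB i j) (hAB j i) (hA0 j i) (hB0 i j)) ⟨a, Finset.mem_univ a, ?_⟩
    refine Finset.sum_lt_sum (fun j _ =>
      mul_le_mul (hAB a j) (hAB j a) (hA0 j a) (hB0 a j)) ⟨b, Finset.mem_univ b, ?_⟩
    rw [hBa, hBb]
    nlinarith [hA0 a b, hA0 b a]
  -- summability
  have hsumB : Summable (fun k : ℕ => (B ^ k).trace / (k.factorial : ℝ)) := by
    have : (fun k : ℕ => (B ^ k).trace / (k.factorial : ℝ))
        = fun k : ℕ => ∑ i, ((adjMatrix_isHermitian (insert e' E)).eigenvalues i) ^ k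
            / (k.factorial : ℝ) := by
      funext k
      rw [my_trace_pow_eq _ (adjMatrix_isHermitian (insert e' E)) k, Finset.sum_div]
    rw [this]
    exact summable_sum fun i _ => Real.summable_pow_div_factorial _
  rw [estrada_eq_tsum, estrada_eq_tsum]
  refine Summable.tsum_lt_tsum_of_nonneg (i := 2)
    (fun k => div_nonneg (htr0 k) (by positivity))
    (fun k => by
      have := htr_le k
      gcongr)
    (by
      have h2 : (0:ℝ) < ((2:ℕ).factorial : ℝ) := by positivity
      exact (div_lt_div_iff_of_pos_right h2).mpr htr2)
    hsumB
end
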